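/- Let C be a Hopf algebra over k and let δ: C⊗C → k be a cointegral on C. Then the k-linear map λ: C → k defined by λ(c) = δ(c⊗1_C) is a normalised left integral on C, i.e. c₍₁₎λ(c₍₂₎) = λ(c)·1_C for all c ∈ C and λ(1_C) = 1. -/
import Mathlib


open TensorProduct LinearMap

noncomputable section

variable {k : Type*} [Field k]
variable {C : Type*} [Ring C] [HopfAlgebra k C]

/-- A cointegral on the coalgebra `C`: `δ(c₍₁₎ ⊗ c₍₂₎) = ε(c)` and
`c₍₁₎ δ(c₍₂₎ ⊗ c') = δ(c ⊗ c'₍₁₎) c'₍₂₎`. -/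
def IsCointegral (δ : C ⊗[k] C →ₗ[k] k) : Prop :=
  (∀ c : C, δ (Coalgebra.comul (R := k) c) = Coalgebra.counit (R := k) c) ∧
  (∀ c c' : C,
    (TensorProduct.rid k C) (lTensor C δ ((TensorProduct.assoc k C C C)
      ((Coalgebra.comul (R := k) c) ⊗ₜ c'))) =
    (TensorProduct.lid k C) (rTensor C δ ((TensorProduct.assoc k C C C).symm
      (c ⊗ₜ (Coalgebra.comul (R := k) c')))))

lemma lTensor_flip_one (δ : C ⊗[k] C →ₗ[k] k) (x : C ⊗[k] C) :
    lTensor C (δ ∘ₗ (TensorProduct.mk k C C).flip (1 : C)) x =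
    lTensor C δ ((TensorProduct.assoc k C C C) (x ⊗ₜ (1 : C))) := by
  induction x using TensorProduct.induction_on with
  | zero => rw [TensorProduct.zero_tmul, map_zero, LinearEquiv.map_zero, map_zero]
  | tmul a b => simp
  | add x y hx hy =>
      simp only [map_add, add_tmul] at *
      rw [hx, hy]

/-- A cointegral `δ` on a Hopf algebra `C` yields the normalised left integral
`λ(c) = δ(c ⊗ 1)`: `c₍₁₎λ(c₍₂₎) = λ(c)·1` and `λ(1) = 1`. -/
theorem cointegral_gives_integral
    (δ : C ⊗[k] C →ₗ[k] k) (hδ : IsCointegral δ) :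
    (∀ c : C,
      (TensorProduct.rid k C)
        (lTensor C (δ ∘ₗ (TensorProduct.mk k C C).flip (1 : C))
          (Coalgebra.comul (R := k) c)) =
      (δ ∘ₗ (TensorProduct.mk k C C).flip (1 : C)) c • (1 : C)) ∧
    (δ ∘ₗ (TensorProduct.mk k C C).flip (1 : C)) 1 = 1 := by
  constructor
  · intro c
    rw [lTensor_flip_one]
    have h := hδ.2 c 1
    rw [show (Coalgebra.comul (R := k) (1 : C)) = (1 : C) ⊗ₜ[k] (1 : C) by
      rw [Bialgebra.comul_one]; rfl] at h
    rw [h]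
    simp
  · have h := hδ.1 1
    rw [show (Coalgebra.comul (R := k) (1 : C)) = (1 : C) ⊗ₜ[k] (1 : C) by
      rw [Bialgebra.comul_one]; rfl] at h
    simpa using h
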